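/- arXiv:2109.11298 — 2 statements merged into one kernel-verified Lean document; each statement's English description precedes it below -/
import Mathlib

section
/- Suppose $X \in L^2$ is centred and $p = 1/2$. Then $\hat{S}_n / (\sqrt{n}\log n) \to 0$ in $L^2$ as $n \to \infty$. -/
/-!
For `p = 1/2`, conditioning on `ℱ n` gives `E[X_n²] = σ²` for every `n ≥ 1` and
`E[Ŝ_n X_{n+1}] = E[Ŝ_n²] / (2n)`, so `a_n = E[Ŝ_n²]` satisfies `a_{n+1} = (1 + 1/n) a_n + σ²`,
whose solution is `a_n = σ² n H_n` with `H_n` the harmonic number. Hence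
`E[(Ŝ_n / (√n log n))²] = σ² H_n / (log n)² ≤ σ² (1 + log n) / (log n)² → 0`.
-/

open MeasureTheory ProbabilityTheory Filter Finset Topology

lemma tendsto_harmonic_div_log_sq :
    Tendsto (fun n : ℕ => (harmonic n : ℝ) / Real.log n ^ 2) atTop (𝓝 0) := by
  have hlog : Tendsto (fun n : ℕ => Real.log n) atTop atTop :=
    Real.tendsto_log_atTop.comp tendsto_natCast_atTop_atTop
  have hupper : ∀ᶠ n : ℕ in atTop, (harmonic n : ℝ) / Real.log n ^ 2 ≤ 2 / Real.log n := by
    filter_upwards [hlog.eventually_ge_atTop 1] with n hn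
    rw [div_le_div_iff₀ (by positivity) (by positivity)]
    nlinarith [harmonic_le_one_add_log n]
  refine tendsto_of_tendsto_of_tendsto_of_le_of_le' tendsto_const_nhds
    (tendsto_const_nhds.div_atTop hlog) (Eventually.of_forall fun n => ?_) hupper
  unfold harmonic
  push_cast
  positivity

lemma MeasureTheory.MemLp.eLpNorm_two_eq_ofReal_sqrt {α : Type*} {m : MeasurableSpace α}
    {μ : Measure α} {f : α → ℝ} (hf : MemLp f 2 μ) :
    eLpNorm f 2 μ = ENNReal.ofReal √(∫ x, f x ^ 2 ∂μ) := by
  rw [hf.eLpNorm_eq_integral_rpow_norm two_ne_zero ENNReal.ofNat_ne_top, Real.sqrt_eq_rpow]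
  norm_num [Real.rpow_two]

lemma MeasureTheory.integral_eq_of_condExp_ae_eq {Ω : Type*} {m mΩ : MeasurableSpace Ω}
    {μ : Measure Ω} (hm : m ≤ mΩ) [SigmaFinite (μ.trim hm)] {f g : Ω → ℝ}
    (h : μ[f | m] =ᵐ[μ] g) : ∫ ω, f ω ∂μ = ∫ ω, g ω ∂μ :=
  (integral_condExp hm).symm.trans (integral_congr_ae h)

section ReinforcedWalk

variable {Ω : Type*}

def partialSum (X : ℕ → Ω → ℝ) (n : ℕ) (ω : Ω) : ℝ := ∑ j ∈ Icc 1 n, X j ω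

lemma partialSum_succ (X : ℕ → Ω → ℝ) (n : ℕ) (ω : Ω) :
    partialSum X (n + 1) ω = partialSum X n ω + X (n + 1) ω :=
  sum_Icc_succ_top (Nat.le_add_left 1 n) _

variable {mΩ : MeasurableSpace Ω} {P : Measure Ω} {ℱ : Filtration ℕ mΩ} {σ p : ℝ}
  {X : ℕ → Ω → ℝ}

lemma memLp_partialSum (hL2 : ∀ n, MemLp (X n) 2 P) (n : ℕ) : MemLp (partialSum X n) 2 P :=
  memLp_finsetSum _ fun j _ => hL2 j

lemma stronglyMeasurable_partialSum (hadapt : StronglyAdapted ℱ X) (n : ℕ) :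
    StronglyMeasurable[ℱ n] (partialSum X n) :=
  Finset.stronglyMeasurable_fun_sum _ fun j hj => (hadapt j).mono (ℱ.mono (mem_Icc.1 hj).2)

lemma integral_sq_eq_of_condExp_sq [IsProbabilityMeasure P] (hL2 : ∀ n, MemLp (X n) 2 P)
    (hvar1 : ∫ ω, X 1 ω ^ 2 ∂P = σ ^ 2)
    (hcond2 : ∀ n : ℕ, 1 ≤ n → P[fun ω => X (n + 1) ω ^ 2 | ℱ n]
      =ᵐ[P] fun ω => p * (∑ j ∈ Icc 1 n, X j ω ^ 2) / n + (1 - p) * σ ^ 2)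
    {n : ℕ} (hn : 1 ≤ n) : ∫ ω, X n ω ^ 2 ∂P = σ ^ 2 := by
  induction n using Nat.strong_induction_on with
  | _ n ih =>
  obtain rfl | ⟨m, hm, rfl⟩ : n = 1 ∨ ∃ m, 1 ≤ m ∧ n = m + 1 :=
    (eq_or_ne n 1).imp_right fun h => ⟨n - 1, by omega, by omega⟩
  · exact hvar1
  have hsq : ∀ j, Integrable (fun ω => X j ω ^ 2) P := fun j => (hL2 j).integrable_sq
  have hsum : ∑ j ∈ Icc 1 m, ∫ ω, X j ω ^ 2 ∂P = m * σ ^ 2 := by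
    rw [sum_congr rfl fun j hj => ih j (Nat.lt_succ_of_le (mem_Icc.1 hj).2) (mem_Icc.1 hj).1]
    simp
  have hm0 : (m : ℝ) ≠ 0 := by positivity
  rw [integral_eq_of_condExp_ae_eq (ℱ.le m) (hcond2 m hm),
    integral_add (((integrable_finsetSum _ fun j _ => hsq j).const_mul _).div_const _)
      (integrable_const _),
    integral_div, integral_const_mul, integral_finsetSum _ fun j _ => hsq j, hsum]
  simp only [integral_const, probReal_univ, smul_eq_mul, one_mul]
  field_simp
  ring

lemma integral_partialSum_mul_succ [IsFiniteMeasure P] (hL2 : ∀ n, MemLp (X n) 2 P)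
    (hadapt : StronglyAdapted ℱ X)
    (hcond : ∀ n : ℕ, 1 ≤ n →
      P[X (n + 1) | ℱ n] =ᵐ[P] fun ω => (p / n) * ∑ j ∈ Icc 1 n, X j ω)
    {n : ℕ} (hn : 1 ≤ n) :
    ∫ ω, partialSum X n ω * X (n + 1) ω ∂P = p / n * ∫ ω, partialSum X n ω ^ 2 ∂P := by
  have hpull : P[fun ω => partialSum X n ω * X (n + 1) ω | ℱ n]
      =ᵐ[P] fun ω => partialSum X n ω * P[X (n + 1) | ℱ n] ω :=
    condExp_mul_of_stronglyMeasurable_left (stronglyMeasurable_partialSum hadapt n)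
      ((memLp_partialSum hL2 n).integrable_mul (hL2 (n + 1)))
      ((hL2 (n + 1)).integrable one_le_two)
  have hcondExp : P[fun ω => partialSum X n ω * X (n + 1) ω | ℱ n]
      =ᵐ[P] fun ω => p / n * partialSum X n ω ^ 2 := by
    filter_upwards [hpull, hcond n hn] with ω hpullω hcondω
    rw [hpullω, hcondω, partialSum]
    ring
  rw [integral_eq_of_condExp_ae_eq (ℱ.le n) hcondExp, integral_const_mul]

lemma integral_partialSum_sq_succ [IsProbabilityMeasure P] (hL2 : ∀ n, MemLp (X n) 2 P)
    (hadapt : StronglyAdapted ℱ X)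
    (hvar1 : ∫ ω, X 1 ω ^ 2 ∂P = σ ^ 2)
    (hcond : ∀ n : ℕ, 1 ≤ n →
      P[X (n + 1) | ℱ n] =ᵐ[P] fun ω => (p / n) * ∑ j ∈ Icc 1 n, X j ω)
    (hcond2 : ∀ n : ℕ, 1 ≤ n → P[fun ω => X (n + 1) ω ^ 2 | ℱ n]
      =ᵐ[P] fun ω => p * (∑ j ∈ Icc 1 n, X j ω ^ 2) / n + (1 - p) * σ ^ 2)
    {n : ℕ} (hn : 1 ≤ n) :
    ∫ ω, partialSum X (n + 1) ω ^ 2 ∂P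
      = (1 + 2 * p / n) * ∫ ω, partialSum X n ω ^ 2 ∂P + σ ^ 2 := by
  have hS := memLp_partialSum hL2 n
  have hcross : Integrable (fun ω => 2 * (partialSum X n ω * X (n + 1) ω)) P :=
    (hS.integrable_mul (hL2 (n + 1))).const_mul 2
  have hleft : Integrable
      (fun ω => partialSum X n ω ^ 2 + 2 * (partialSum X n ω * X (n + 1) ω)) P :=
    hS.integrable_sq.add hcross
  have hexpand : (fun ω => partialSum X (n + 1) ω ^ 2) = fun ω =>
      (partialSum X n ω ^ 2 + 2 * (partialSum X n ω * X (n + 1) ω)) + X (n + 1) ω ^ 2 := by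
    ext ω
    rw [partialSum_succ]
    ring
  rw [hexpand, integral_add hleft (hL2 (n + 1)).integrable_sq,
    integral_add hS.integrable_sq hcross,
    integral_const_mul, integral_partialSum_mul_succ hL2 hadapt hcond hn,
    integral_sq_eq_of_condExp_sq hL2 hvar1 hcond2 (Nat.le_add_left 1 n)]
  ring

lemma integral_partialSum_sq_eq_harmonic [IsProbabilityMeasure P] (hp : p = 1 / 2)
    (hL2 : ∀ n, MemLp (X n) 2 P)
    (hadapt : StronglyAdapted ℱ X)
    (hvar1 : ∫ ω, X 1 ω ^ 2 ∂P = σ ^ 2)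
    (hcond : ∀ n : ℕ, 1 ≤ n →
      P[X (n + 1) | ℱ n] =ᵐ[P] fun ω => (p / n) * ∑ j ∈ Icc 1 n, X j ω)
    (hcond2 : ∀ n : ℕ, 1 ≤ n → P[fun ω => X (n + 1) ω ^ 2 | ℱ n]
      =ᵐ[P] fun ω => p * (∑ j ∈ Icc 1 n, X j ω ^ 2) / n + (1 - p) * σ ^ 2)
    {n : ℕ} (hn : 1 ≤ n) :
    ∫ ω, partialSum X n ω ^ 2 ∂P = σ ^ 2 * n * harmonic n := by
  induction n, hn using Nat.le_induction with
  | base => simpa [partialSum] using hvar1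
  | succ n hn ih =>
    rw [integral_partialSum_sq_succ hL2 hadapt hvar1 hcond hcond2 hn, ih, hp, harmonic_succ]
    have hn0 : (n : ℝ) ≠ 0 := by positivity
    push_cast
    field_simp

lemma integral_sq_partialSum_div_sqrt_mul_log [IsProbabilityMeasure P] (hp : p = 1 / 2)
    (hL2 : ∀ n, MemLp (X n) 2 P)
    (hadapt : StronglyAdapted ℱ X)
    (hvar1 : ∫ ω, X 1 ω ^ 2 ∂P = σ ^ 2)
    (hcond : ∀ n : ℕ, 1 ≤ n →
      P[X (n + 1) | ℱ n] =ᵐ[P] fun ω => (p / n) * ∑ j ∈ Icc 1 n, X j ω)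
    (hcond2 : ∀ n : ℕ, 1 ≤ n → P[fun ω => X (n + 1) ω ^ 2 | ℱ n]
      =ᵐ[P] fun ω => p * (∑ j ∈ Icc 1 n, X j ω ^ 2) / n + (1 - p) * σ ^ 2)
    {n : ℕ} (hn : 1 ≤ n) :
    ∫ ω, (partialSum X n ω / (√n * Real.log n)) ^ 2 ∂P
      = σ ^ 2 * ((harmonic n : ℝ) / Real.log n ^ 2) := by
  have hn0 : (n : ℝ) ≠ 0 := by positivity
  simp_rw [div_pow]
  rw [integral_div, integral_partialSum_sq_eq_harmonic hp hL2 hadapt hvar1 hcond hcond2 hn,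
    mul_pow, Real.sq_sqrt (Nat.cast_nonneg n)]
  field_simp

end ReinforcedWalk

theorem reinforced_L2_LLN_critical_general
    {Ω : Type*} {mΩ : MeasurableSpace Ω} (P : Measure Ω) [IsProbabilityMeasure P]
    (ℱ : Filtration ℕ mΩ)
    (σ : ℝ) (p : ℝ) (hp : p = 1 / 2)
    (hatX : ℕ → Ω → ℝ)
    (hL2 : ∀ n, MemLp (hatX n) 2 P)
    (hadapt : StronglyAdapted ℱ hatX)
    (hvar1 : ∫ ω, (hatX 1 ω) ^ 2 ∂P = σ ^ 2)
    (hcond : ∀ n : ℕ, 1 ≤ n →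
      P[hatX (n + 1) | ℱ n]
        =ᵐ[P] fun ω => (p / n) * ∑ j ∈ Finset.Icc 1 n, hatX j ω)
    (hcond2 : ∀ n : ℕ, 1 ≤ n →
      P[fun ω => (hatX (n + 1) ω) ^ 2 | ℱ n]
        =ᵐ[P] fun ω => p * (∑ j ∈ Finset.Icc 1 n, (hatX j ω) ^ 2) / n + (1 - p) * σ ^ 2) :
    Tendsto
      (fun n : ℕ =>
        eLpNorm (fun ω => (∑ j ∈ Finset.Icc 1 n, hatX j ω) / (Real.sqrt n * Real.log n)) 2 P)
      atTop (nhds 0) := by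
  change Tendsto (fun n : ℕ => eLpNorm (fun ω => partialSum hatX n ω / (√n * Real.log n)) 2 P)
    atTop (nhds 0)
  have hlim : Tendsto (fun n : ℕ => ENNReal.ofReal √(σ ^ 2 * ((harmonic n : ℝ) / Real.log n ^ 2)))
      atTop (nhds 0) := by
    simpa using ENNReal.tendsto_ofReal ((Real.continuous_sqrt.tendsto _).comp
      (tendsto_harmonic_div_log_sq.const_mul (σ ^ 2)))
  refine hlim.congr' ?_
  filter_upwards [eventually_ge_atTop 1] with n hn
  have hmem : MemLp (fun ω => partialSum hatX n ω / (√n * Real.log n)) 2 P := by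
    simpa only [div_eq_mul_inv] using (memLp_partialSum hL2 n).mul_const _
  rw [hmem.eLpNorm_two_eq_ofReal_sqrt,
    integral_sq_partialSum_div_sqrt_mul_log hp hL2 hadapt hvar1 hcond hcond2 hn]

/-- for `p = 1/2`, `Ŝₙ / (√n log n) → 0` in `L²`. -/
theorem reinforced_L2_LLN_critical
    {Ω : Type*} {mΩ : MeasurableSpace Ω} (P : Measure Ω) [IsProbabilityMeasure P]
    (ℱ : Filtration ℕ mΩ)
    (σ : ℝ) (p : ℝ) (hp : p = 1 / 2)
    (hatX : ℕ → Ω → ℝ)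
    (hL2 : ∀ n, MemLp (hatX n) 2 P)
    (hadapt : StronglyAdapted ℱ hatX)
    (hcent : ∫ ω, hatX 1 ω ∂P = 0)
    (hvar1 : ∫ ω, (hatX 1 ω) ^ 2 ∂P = σ ^ 2)
    (hcond : ∀ n : ℕ, 1 ≤ n →
      P[hatX (n + 1) | ℱ n]
        =ᵐ[P] fun ω => (p / n) * ∑ j ∈ Finset.Icc 1 n, hatX j ω)
    (hcond2 : ∀ n : ℕ, 1 ≤ n →
      P[fun ω => (hatX (n + 1) ω) ^ 2 | ℱ n]
        =ᵐ[P] fun ω => p * (∑ j ∈ Finset.Icc 1 n, (hatX j ω) ^ 2) / n + (1 - p) * σ ^ 2) :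
    Tendsto
      (fun n : ℕ =>
        eLpNorm (fun ω => (∑ j ∈ Finset.Icc 1 n, hatX j ω) / (Real.sqrt n * Real.log n)) 2 P)
      atTop (nhds 0) :=
  reinforced_L2_LLN_critical_general P ℱ σ p hp hatX hL2 hadapt hvar1 hcond hcond2
end

section
/- Let $X \in L^2$ be centred with variance $\sigma^2$, $p \in (0,1]$, and let $(S_n)$ and $(\check{S}_n)$ be the random walk and its counterbalanced version built from the same randomness. Then for every $k \geq 2$, $\mathbb{E}(\Delta\check{M}_k \cdot X_k \mid \mathcal{F}_{k-1}) = \check{a}_k (1-p)\sigma^2$, where $\check{M}_k = \check{a}_k\check{S}_k$. In particular, when $p = 1$ this conditional covariance vanishes. -/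
open MeasureTheory ProbabilityTheory Filter Finset

/-- `ǎₙ = ∏_{k=1}^{n-1} k/(k-p) = Γ(n)/Γ(n-p)` (normalised so that `ǎ₁ = 1`). -/
noncomputable def checka (p : ℝ) (n : ℕ) : ℝ :=
  ∏ k ∈ Finset.Ico 1 n, (k : ℝ) / ((k : ℝ) - p)

/-!
Since `Šₖ = Šₖ₋₁ + X̌ₖ`, we have `ΔM̌ₖ Xₖ = ǎₖ X̌ₖ Xₖ + (ǎₖ - ǎₖ₋₁) Šₖ₋₁ Xₖ`, and the
counterbalancing rule gives `X̌ₖ Xₖ = 1{εₖ = 0} Xₖ² - ∑_{j<k} X̌ⱼ 1{εₖ = 1, U[k-1] = j} Xₖ`.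
Every term is an `ℱₖ₋₁`-measurable factor times a function of `(εₖ, U[k-1], Xₖ)`, which is
independent of `ℱₖ₋₁`, so it may be replaced by its mean. As `(εₖ, U[k-1])` is independent of
the centred `Xₖ`, only `ǎₖ E[1{εₖ = 0} Xₖ²] = ǎₖ (1 - p) σ²` survives; the values of the weights
`ǎ` play no role.
-/

theorem counterbalanced_increment_mul_step_eq (a a' ξ : ℝ) {n : ℕ} (x : ℕ → ℝ) (b : Bool) {v : ℕ}
    (hv : v ∈ Icc 1 n) (hx : x (n + 1) = if b = true then -x v else ξ) :
    (a * ∑ j ∈ Icc 1 (n + 1), x j - a' * ∑ j ∈ Icc 1 n, x j) * ξ =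
      a * (if b = false then ξ ^ 2 else 0) +
        ∑ j ∈ Icc 1 n, x j * ((a - a') * ξ - a * if b = true ∧ v = j then ξ else 0) := by
  rw [sum_Icc_succ_top (by omega), hx]
  simp only [mul_sub, sum_sub_distrib, ← sum_mul]
  cases b
  · simp only [Bool.false_eq_true, ↓reduceIte, false_and, mul_zero, sum_const_zero, sub_zero]
    ring
  · simp only [↓reduceIte, Bool.true_eq_false, mul_zero, ← mul_assoc, true_and, mul_ite,
      mul_comm _ a, sum_ite_eq, hv, zero_add]
    ring

section Independence

variable {Ω : Type*} {m₁ m mΩ : MeasurableSpace Ω} {P : Measure Ω}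

theorem ProbabilityTheory.IndepFun.integral_indicator_preimage {β : Type*} [MeasurableSpace β]
    {V : Ω → β} {Z : Ω → ℝ} (h : IndepFun V Z P) (hV : Measurable V) (hZ : Measurable Z) {s : Set β}
    (hs : MeasurableSet s) :
    ∫ ω, (V ⁻¹' s).indicator Z ω ∂P = P.real (V ⁻¹' s) * ∫ ω, Z ω ∂P := by
  have hind : IndepFun ((V ⁻¹' s).indicator (1 : Ω → ℝ)) Z P := by
    convert h.comp (measurable_one.indicator hs) measurable_id using 1
    · ext ω
      exact (Set.indicator_comp_right (g := (1 : β → ℝ)) V).symm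
    · rfl
  rw [← integral_indicator_one (hV hs), ← hind.integral_mul_eq_mul_integral
    ((measurable_one.indicator (hV hs)).aestronglyMeasurable) hZ.aestronglyMeasurable]
  congr with ω
  by_cases hω : ω ∈ V ⁻¹' s <;> simp [hω]

variable [IsFiniteMeasure P]

theorem condExp_mul_of_indep (hm₁ : m₁ ≤ mΩ) (hm : m ≤ mΩ) (hind : Indep m₁ m P)
    {Y Z : Ω → ℝ} (hY : StronglyMeasurable[m] Y) (hZ : StronglyMeasurable[m₁] Z)
    (hYZ : Integrable (Y * Z) P) (hZi : Integrable Z P) :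
    P[Y * Z | m] =ᵐ[P] fun ω => Y ω * ∫ ω', Z ω' ∂P := by
  filter_upwards [condExp_mul_of_stronglyMeasurable_left hY hYZ hZi,
    condExp_indep_eq hm₁ hm hZ hind] with ω hYZω hZω
  rw [hYZω, Pi.mul_apply, hZω]

theorem condExp_sum_mul_of_indep_eq_zero (hm₁ : m₁ ≤ mΩ) (hm : m ≤ mΩ) (hind : Indep m₁ m P)
    {ι : Type*} {s : Finset ι} {Y W : ι → Ω → ℝ}
    (hY : ∀ j ∈ s, StronglyMeasurable[m] (Y j)) (hW : ∀ j ∈ s, StronglyMeasurable[m₁] (W j))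
    (hY2 : ∀ j ∈ s, MemLp (Y j) 2 P) (hW2 : ∀ j ∈ s, MemLp (W j) 2 P)
    (hcent : ∀ j ∈ s, ∫ ω, W j ω ∂P = 0) :
    P[∑ j ∈ s, Y j * W j | m] =ᵐ[P] 0 := by
  have hint : ∀ j ∈ s, Integrable (Y j * W j) P := fun j hj => (hY2 j hj).integrable_mul (hW2 j hj)
  have hterm : ∀ j ∈ s, P[Y j * W j | m] =ᵐ[P] 0 := fun j hj => by
    simpa [hcent j hj, Pi.zero_def] using condExp_mul_of_indep hm₁ hm hind (hY j hj) (hW j hj)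
      (hint j hj) ((hW2 j hj).integrable one_le_two)
  filter_upwards [condExp_finsetSum hint m, (eventually_all_finset s).2 hterm] with ω hsum hω
  rw [hsum, Finset.sum_apply]
  exact sum_eq_zero hω

theorem condExp_add_sum_mul_of_indep (hm₁ : m₁ ≤ mΩ) (hm : m ≤ mΩ) (hind : Indep m₁ m P)
    {ι : Type*} {s : Finset ι} {Z : Ω → ℝ} {Y W : ι → Ω → ℝ} (hZ : StronglyMeasurable[m₁] Z)
    (hZi : Integrable Z P) (hY : ∀ j ∈ s, StronglyMeasurable[m] (Y j))
    (hW : ∀ j ∈ s, StronglyMeasurable[m₁] (W j)) (hY2 : ∀ j ∈ s, MemLp (Y j) 2 P)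
    (hW2 : ∀ j ∈ s, MemLp (W j) 2 P) (hcent : ∀ j ∈ s, ∫ ω, W j ω ∂P = 0) :
    P[Z + ∑ j ∈ s, Y j * W j | m] =ᵐ[P] fun _ => ∫ ω, Z ω ∂P := by
  have hsumi : Integrable (∑ j ∈ s, Y j * W j) P :=
    integrable_finsetSum' _ fun j hj => (hY2 j hj).integrable_mul (hW2 j hj)
  filter_upwards [condExp_add hZi hsumi m, condExp_indep_eq hm₁ hm hZ hind,
    condExp_sum_mul_of_indep_eq_zero hm₁ hm hind hY hW hY2 hW2 hcent] with ω hadd hZω hsum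
  rw [hadd, Pi.add_apply, hZω, hsum, Pi.zero_apply, add_zero]

theorem condExp_counterbalanced_increment_mul_step (hm : m ≤ mΩ) (a a' σ : ℝ) {n : ℕ}
    {x : ℕ → Ω → ℝ} {ξ : Ω → ℝ} {ε : Ω → Bool} {V : Ω → ℕ} (hx2 : ∀ j ∈ Icc 1 n, MemLp (x j) 2 P)
    (hxm : ∀ j ∈ Icc 1 n, StronglyMeasurable[m] (x j)) (hξ2 : MemLp ξ 2 P) (hξ : Measurable ξ)
    (hε : Measurable ε) (hV : Measurable V)
    (hstep : ∀ ω, x (n + 1) ω = if ε ω = true then -x (V ω) ω else ξ ω)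
    (hVrange : ∀ ω, V ω ∈ Icc 1 n)
    (hindep : Indep (MeasurableSpace.comap (fun ω => (ε ω, V ω, ξ ω)) inferInstance) m P)
    (hindep' : IndepFun (fun ω => (ε ω, V ω)) ξ P)
    (hcent : ∫ ω, ξ ω ∂P = 0) (hvar : ∫ ω, ξ ω ^ 2 ∂P = σ ^ 2) :
    P[fun ω => (a * ∑ j ∈ Icc 1 (n + 1), x j ω - a' * ∑ j ∈ Icc 1 n, x j ω) * ξ ω | m]
      =ᵐ[P] fun _ => a * P.real (ε ⁻¹' {false}) * σ ^ 2 := by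
  set T : Ω → Bool × ℕ × ℝ := fun ω => (ε ω, V ω, ξ ω)
  have hT : Measurable T := hε.prodMk (hV.prodMk hξ)
  set Z : Ω → ℝ := a • (ε ⁻¹' {false}).indicator fun ω => ξ ω ^ 2
  set W : ℕ → Ω → ℝ := fun j =>
    (a - a') • ξ - a • ((fun ω => (ε ω, V ω)) ⁻¹' {(true, j)}).indicator ξ
  have hdecomp : (fun ω => (a * ∑ j ∈ Icc 1 (n + 1), x j ω - a' * ∑ j ∈ Icc 1 n, x j ω) * ξ ω)
      = Z + ∑ j ∈ Icc 1 n, x j * W j := by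
    ext ω
    refine (counterbalanced_increment_mul_step_eq a a' (ξ ω) (fun j => x j ω) (ε ω) (hVrange ω)
      (hstep ω)).trans ?_
    simp [Z, W, Set.indicator]
  have hZ : StronglyMeasurable[MeasurableSpace.comap T inferInstance] Z :=
    ((((measurable_snd.snd.pow_const 2).indicator
      (measurable_fst (measurableSet_singleton false))).const_smul a).comp
      (comap_measurable T)).stronglyMeasurable
  have hW : ∀ j, StronglyMeasurable[MeasurableSpace.comap T inferInstance] (W j) := fun j =>
    (((measurable_snd.snd.const_smul _).sub ((measurable_snd.snd.indicator
      ((measurable_fst.prodMk measurable_snd.fst) (measurableSet_singleton (true, j)))).const_smul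
      a)).comp (comap_measurable T)).stronglyMeasurable
  have hξi := hξ2.integrable one_le_two
  have hsel : ∀ j, MeasurableSet ((fun ω => (ε ω, V ω)) ⁻¹' {(true, j)}) := fun j =>
    (hε.prodMk hV) (measurableSet_singleton _)
  have hW2 : ∀ j, MemLp (W j) 2 P := fun j =>
    (hξ2.const_smul _).sub ((hξ2.indicator (hsel j)).const_smul a)
  have hWmean : ∀ j, ∫ ω, W j ω ∂P = 0 := fun j => by
    simp only [W, Pi.sub_apply, Pi.smul_apply, smul_eq_mul]
    rw [integral_sub (hξi.const_mul _) ((hξi.indicator (hsel j)).const_mul a),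
      integral_const_mul, integral_const_mul,
      hindep'.integral_indicator_preimage (hε.prodMk hV) hξ (measurableSet_singleton _), hcent]
    ring
  have hZmean : ∫ ω, Z ω ∂P = a * P.real (ε ⁻¹' {false}) * σ ^ 2 := by
    have hεξ : IndepFun ε (fun ω => ξ ω ^ 2) P :=
      hindep'.comp measurable_fst (measurable_id.pow_const 2)
    simp only [Z, Pi.smul_apply, smul_eq_mul]
    rw [integral_const_mul, ← hvar, mul_assoc, hεξ.integral_indicator_preimage hε (hξ.pow_const 2)
      (measurableSet_singleton false)]
  rw [hdecomp, ← hZmean]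
  exact condExp_add_sum_mul_of_indep hT.comap_le hm hindep hZ
    ((hξ2.integrable_sq.indicator (hε (measurableSet_singleton false))).smul a) hxm
    (fun j _ => hW j) hx2 (fun j _ => hW2 j) (fun j _ => hWmean j)

end Independence

theorem counterbalanced_predictable_covariation_with_walk_general
    {Ω : Type*} {mΩ : MeasurableSpace Ω} (P : Measure Ω) [IsProbabilityMeasure P]
    (ℱ : Filtration ℕ mΩ)
    (p σ : ℝ) (hp : p ∈ Set.Ioc (0 : ℝ) 1)
    (X checkX : ℕ → Ω → ℝ) (ε : ℕ → Ω → Bool) (U : ℕ → Ω → ℕ)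
    (hXL2 : ∀ k, MemLp (X k) 2 P) (hcheckL2 : ∀ k, MemLp (checkX k) 2 P)
    (hXmeas : ∀ k, Measurable (X k)) (hεmeas : ∀ k, Measurable (ε k))
    (hUmeas : ∀ k, Measurable (U k))
    (hadapt : StronglyAdapted ℱ checkX)
    -- `X̂ₖ = Xₖ 1_{εₖ=0} + X̂_{U[k-1]} 1_{εₖ=1}`, with `U[k-1]` uniform on `{1,…,k-1}`
    (hdef : ∀ k : ℕ, 2 ≤ k → ∀ ω, checkX k ω =
      if ε k ω = true then -(checkX (U (k - 1) ω) ω) else X k ω)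
    (hUrange : ∀ k : ℕ, 2 ≤ k → ∀ ω, U (k - 1) ω ∈ Finset.Icc 1 (k - 1))
    -- `(εₖ, U[k-1], Xₖ)` is independent of `ℱ_{k-1}`
    (hindep : ∀ k : ℕ, 2 ≤ k → Indep
      (MeasurableSpace.comap (fun ω => (ε k ω, U (k - 1) ω, X k ω)) inferInstance)
      (ℱ (k - 1)) P)
    -- `(εₖ, U[k-1])` is independent of `Xₖ`
    (hindep' : ∀ k : ℕ, 2 ≤ k →
      IndepFun (fun ω => (ε k ω, U (k - 1) ω)) (X k) P)
    (hlaw' : ∀ k : ℕ, 2 ≤ k → P {ω | ε k ω = false} = ENNReal.ofReal (1 - p))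
    -- the steps are centred with variance `σ²`
    (hXcent : ∀ k, ∫ ω, X k ω ∂P = 0)
    (hXvar : ∀ k, ∫ ω, (X k ω) ^ 2 ∂P = σ ^ 2) :
    (∀ k : ℕ, 2 ≤ k →
      P[fun ω =>
          (checka p k * ∑ j ∈ Finset.Icc 1 k, checkX j ω
            - checka p (k - 1) * ∑ j ∈ Finset.Icc 1 (k - 1), checkX j ω) * X k ω
        | ℱ (k - 1)]
        =ᵐ[P] fun _ => checka p k * (1 - p) * σ ^ 2)
    ∧ (p = 1 →
      ∀ k : ℕ, 2 ≤ k →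
        P[fun ω =>
            (checka p k * ∑ j ∈ Finset.Icc 1 k, checkX j ω
              - checka p (k - 1) * ∑ j ∈ Finset.Icc 1 (k - 1), checkX j ω) * X k ω
          | ℱ (k - 1)]
          =ᵐ[P] fun _ => 0) := by
  have key : ∀ k : ℕ, 2 ≤ k →
      P[fun ω =>
          (checka p k * ∑ j ∈ Finset.Icc 1 k, checkX j ω
            - checka p (k - 1) * ∑ j ∈ Finset.Icc 1 (k - 1), checkX j ω) * X k ω
        | ℱ (k - 1)]
        =ᵐ[P] fun _ => checka p k * (1 - p) * σ ^ 2 := by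
    intro k hk
    obtain ⟨n, rfl⟩ : ∃ n, k = n + 1 := ⟨k - 1, by omega⟩
    have hfalse : P.real (ε (n + 1) ⁻¹' {false}) = 1 - p := by
      rw [measureReal_def, show ε (n + 1) ⁻¹' {false} = {ω | ε (n + 1) ω = false} from rfl,
        hlaw' _ hk, ENNReal.toReal_ofReal (by linarith [hp.2])]
    rw [← hfalse]
    exact condExp_counterbalanced_increment_mul_step (ℱ.le n) _ _ σ (fun j _ => hcheckL2 j)
      (fun j hj => (hadapt j).mono (ℱ.mono (mem_Icc.1 hj).2)) (hXL2 _) (hXmeas _) (hεmeas _)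
      (hUmeas n) (hdef _ hk) (hUrange _ hk) (hindep _ hk) (hindep' _ hk) (hXcent _) (hXvar _)
  exact ⟨key, fun hp1 k hk => by simpa [hp1] using key k hk⟩

/-- for the random walk and its counterbalanced version built from
the same randomness, for every `k ≥ 2`,
`E(ΔM̌ₖ · Xₖ | ℱ_{k-1}) = ǎₖ (1-p) σ²`, where `M̌ₖ = ǎₖ Šₖ`.  In particular, when
`p = 1` this conditional covariance vanishes. -/
theorem counterbalanced_predictable_covariation_with_walk
    {Ω : Type*} {mΩ : MeasurableSpace Ω} (P : Measure Ω) [IsProbabilityMeasure P]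
    (ℱ : Filtration ℕ mΩ)
    (p σ : ℝ) (hp : p ∈ Set.Ioc (0 : ℝ) 1)
    (X checkX : ℕ → Ω → ℝ) (ε : ℕ → Ω → Bool) (U : ℕ → Ω → ℕ)
    (hXL2 : ∀ k, MemLp (X k) 2 P) (hcheckL2 : ∀ k, MemLp (checkX k) 2 P)
    (hXmeas : ∀ k, Measurable (X k)) (hεmeas : ∀ k, Measurable (ε k))
    (hUmeas : ∀ k, Measurable (U k))
    (hadapt : StronglyAdapted ℱ checkX)
    -- `X̂ₖ = Xₖ 1_{εₖ=0} + X̂_{U[k-1]} 1_{εₖ=1}`, with `U[k-1]` uniform on `{1,…,k-1}`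
    (hdef : ∀ k : ℕ, 2 ≤ k → ∀ ω, checkX k ω =
      if ε k ω = true then -(checkX (U (k - 1) ω) ω) else X k ω)
    (hUrange : ∀ k : ℕ, 2 ≤ k → ∀ ω, U (k - 1) ω ∈ Finset.Icc 1 (k - 1))
    -- `(εₖ, U[k-1], Xₖ)` is independent of `ℱ_{k-1}`
    (hindep : ∀ k : ℕ, 2 ≤ k → Indep
      (MeasurableSpace.comap (fun ω => (ε k ω, U (k - 1) ω, X k ω)) inferInstance)
      (ℱ (k - 1)) P)
    -- `(εₖ, U[k-1])` is independent of `Xₖ`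
    (hindep' : ∀ k : ℕ, 2 ≤ k →
      IndepFun (fun ω => (ε k ω, U (k - 1) ω)) (X k) P)
    -- `εₖ` is Bernoulli(`p`), `U[k-1]` uniform, mutually independent
    (hlaw : ∀ k : ℕ, 2 ≤ k → ∀ j ∈ Finset.Icc 1 (k - 1),
      P {ω | ε k ω = true ∧ U (k - 1) ω = j} = ENNReal.ofReal (p / (k - 1 : ℕ)))
    (hlaw' : ∀ k : ℕ, 2 ≤ k → P {ω | ε k ω = false} = ENNReal.ofReal (1 - p))
    -- the steps are centred with variance `σ²`
    (hXcent : ∀ k, ∫ ω, X k ω ∂P = 0)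
    (hXvar : ∀ k, ∫ ω, (X k ω) ^ 2 ∂P = σ ^ 2) :
    (∀ k : ℕ, 2 ≤ k →
      P[fun ω =>
          (checka p k * ∑ j ∈ Finset.Icc 1 k, checkX j ω
            - checka p (k - 1) * ∑ j ∈ Finset.Icc 1 (k - 1), checkX j ω) * X k ω
        | ℱ (k - 1)]
        =ᵐ[P] fun _ => checka p k * (1 - p) * σ ^ 2)
    ∧ (p = 1 →
      ∀ k : ℕ, 2 ≤ k →
        P[fun ω =>
            (checka p k * ∑ j ∈ Finset.Icc 1 k, checkX j ω
              - checka p (k - 1) * ∑ j ∈ Finset.Icc 1 (k - 1), checkX j ω) * X k ω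
          | ℱ (k - 1)]
          =ᵐ[P] fun _ => 0) :=
  counterbalanced_predictable_covariation_with_walk_general P ℱ p σ hp X checkX ε U hXL2 hcheckL2
    hXmeas hεmeas hUmeas hadapt hdef hUrange hindep hindep' hlaw' hXcent hXvar
end
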